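/- There is an absolute constant C with the following property. Let α ∈ (0,π) with α ≠ π/2, set ε_α := min(α, |α − π/2|, π − α), let p ∈ [2,∞) be admissible for α, q := p/(p−1), and for ξ ∈ ℝ set Ξ := 2/q + iξ. Then for all ξ ∈ ℝ and all θ, y ∈ (0,α) with θ ≠ y: |∂_θ K(ξ,θ,y)| ≤ C·ε_α^{−1}, |ξ|·|K(ξ,θ,y)| ≤ C·ε_α^{−1}, and |ξ|·|∂_ξ ∂_θ K(ξ,θ,y)| ≤ C·ε_α^{−1}, where ∂_ξ denotes the partial derivative in the real variable ξ and ∂_θ the partial derivative in θ. -/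

import Mathlib

/-!
Write `Ξ = σ + iξ` with `σ = 2/q = 2 - 2/p ∈ [1, 2)`. Then
`|sin (Ξα)|² = sin² (σα) + sinh² (ξα)`, and admissibility puts `σα` or `σα - π` into
`[ε_α, π - ε_α]`, so that `m := |sin (σα)| ≥ 2ε_α/π` by Jordan's inequality.

Near `θ` the kernel equals `sin (Ξ(t - a)) sin (Ξb) / (Ξ sin (Ξα))` with `|θ - a| + |b| ≤ α`.
The numerators of `∂_θ K` and (using `|ξ| ≤ |Ξ|`) of `ξ K` are therefore at most
`cosh (ξα) ≤ 1 + |sin (Ξα)|`, which gives `O(1/m)`. By the product-to-sum formula, `∂_θ K` is a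
sum of two quotients `sin (Ξw) / sin (Ξα)` with `|w| ≤ α`. The numerator of their `ξ`-derivative,
written as `(w - α) sin (Ξ(α + w)) + (w + α) sin (Ξ(α - w))`, is
`O((sinh (ξα) + sinh² (ξα)) / |ξ|)`, so after division by `|sin (Ξα)|²` the result is again
`O(1/m)`.
-/

noncomputable section

/-- `p ∈ [2,∞)` is admissible for the aperture `α`: `p ≥ 4` when `α < π/2`, and
`p ≥ 2 p_α = 2·2α/(2α−π)` when `α > π/2`. -/
def Admissible (α p : ℝ) : Prop :=
  (α < Real.pi / 2 ∧ 4 ≤ p) ∨ (Real.pi / 2 < α ∧ 2 * (2 * α / (2 * α - Real.pi)) ≤ p)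

/-- `Ξ = 2/q + iξ`. -/
def Xi (q ξ : ℝ) : ℂ := ((2 / q : ℝ) : ℂ) + (ξ : ℂ) * Complex.I

/-- The Green kernel, at frequency `ξ`, of `(∂_t + 2/q)² U + ∂_θ² U = h` on
`ℝ × (0,α)` with Dirichlet boundary conditions. -/
def Kker (q α ξ θ y : ℝ) : ℂ :=
  if θ ≤ y then
    Complex.sin (Xi q ξ * (θ : ℂ)) * Complex.sin (Xi q ξ * ((y : ℂ) - (α : ℂ))) /
      (Xi q ξ * Complex.sin (Xi q ξ * (α : ℂ)))
  else
    Complex.sin (Xi q ξ * ((θ : ℂ) - (α : ℂ))) * Complex.sin (Xi q ξ * (y : ℂ)) /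
      (Xi q ξ * Complex.sin (Xi q ξ * (α : ℂ)))

namespace Real

lemma cosh_le_one_add_sinh {x : ℝ} (hx : 0 ≤ x) : cosh x ≤ 1 + sinh x := by
  have : cosh x - sinh x ≤ 1 := by
    rw [cosh_sub_sinh]; exact exp_le_one_iff.mpr (by linarith)
  linarith

lemma cosh_le_exp {x : ℝ} (hx : 0 ≤ x) : cosh x ≤ exp x := by
  rw [← cosh_add_sinh]
  linarith [sinh_nonneg_iff.mpr hx]

lemma cosh_mul_cosh_le_cosh {a b c : ℝ} (ha : 0 ≤ a) (hb : 0 ≤ b) (h : a + b ≤ c) :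
    cosh a * cosh b ≤ cosh c := by
  calc cosh a * cosh b ≤ cosh (a + b) := by
        rw [cosh_add]; nlinarith [sinh_nonneg_iff.mpr ha, sinh_nonneg_iff.mpr hb]
    _ ≤ cosh c := by
        rw [cosh_le_cosh, abs_of_nonneg (by linarith), abs_of_nonneg (by linarith)]; exact h

lemma two_div_pi_mul_le_sin {d x : ℝ} (hd : 0 ≤ d) (h₁ : d ≤ x) (h₂ : x ≤ π - d) :
    2 / π * d ≤ sin x := by
  rcases le_total x (π / 2) with h | h
  · exact (mul_le_mul_of_nonneg_left h₁ (by positivity)).trans (mul_le_sin (by linarith) h)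
  · rw [← sin_pi_sub]
    exact (mul_le_mul_of_nonneg_left (by linarith) (by positivity)).trans
      (mul_le_sin (by linarith) (by linarith))

/-- The factor `d e^{-d} ≤ d / (1 + d)` compensates `cosh (2t - d) ≤ e^{2t} e^{-d}`, so the
bound has no extra factor `t` in front of `sinh² t`. -/
lemma mul_cosh_add_mul_cosh_le {d t : ℝ} (hd : 0 ≤ d) (hdt : d ≤ t) :
    d * cosh (2 * t - d) + (2 * t - d) * cosh d ≤ 6 * (sinh t + sinh t ^ 2) := by
  have ht : 0 ≤ t := hd.trans hdt
  set S := sinh t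
  have hS : t ≤ S := self_le_sinh_iff.mpr ht
  have hcosh : cosh t ≤ 1 + S := cosh_le_one_add_sinh ht
  have hexp : exp t ≤ 1 + 2 * S := by rw [← cosh_add_sinh]; linarith
  have hfirst : d * cosh (2 * t - d) ≤ 4 * (S + S ^ 2) := by
    have hde : d * exp (-d) ≤ S / (1 + S) := by
      rw [exp_neg, ← div_eq_mul_inv, div_le_div_iff₀ (exp_pos d) (by linarith)]
      nlinarith [add_one_le_exp d]
    calc d * cosh (2 * t - d) ≤ d * exp (-d) * exp t ^ 2 := by
          rw [mul_assoc, ← exp_nat_mul, ← exp_add]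
          exact mul_le_mul_of_nonneg_left (cosh_le_exp (by linarith)) hd
            |>.trans_eq (by ring_nf)
      _ ≤ S / (1 + S) * (1 + 2 * S) ^ 2 := by gcongr
      _ ≤ 4 * (S + S ^ 2) := by
          rw [div_mul_eq_mul_div, div_le_iff₀ (by linarith)]; nlinarith
  have hsecond : (2 * t - d) * cosh d ≤ 2 * (S + S ^ 2) := by
    calc (2 * t - d) * cosh d ≤ (2 * t) * cosh t := by
          gcongr
          · linarith
          · rw [cosh_le_cosh, abs_of_nonneg hd, abs_of_nonneg ht]; exact hdt
      _ ≤ 2 * (S + S ^ 2) := by nlinarith [one_le_cosh t]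
  linarith

lemma div_le_two_mul_div_of_two_div_pi_mul_le {c m ε : ℝ} (hc : 0 ≤ c) (hε : 0 < ε)
    (hm : 2 / π * ε ≤ m) : c / m ≤ 2 * c / ε := by
  have hπ := pi_pos
  calc c / m ≤ c / (2 / π * ε) := div_le_div_of_nonneg_left hc (by positivity) hm
    _ = π / 2 * c / ε := by field_simp
    _ ≤ 2 * c / ε := by gcongr; linarith [pi_le_four]

end Real

namespace Complex

lemma sq_norm_sin (z : ℂ) : ‖sin z‖ ^ 2 = Real.sin z.re ^ 2 + Real.sinh z.im ^ 2 := by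
  have h : sin z = ↑(Real.sin z.re * Real.cosh z.im) + ↑(Real.cos z.re * Real.sinh z.im) * I := by
    rw [sin_eq]; push_cast; ring
  rw [h, Complex.sq_norm, normSq_add_mul_I]
  linear_combination Real.sin z.re ^ 2 * Real.cosh_sq z.im +
    Real.sinh z.im ^ 2 * Real.sin_sq_add_cos_sq z.re

lemma norm_sin_le_cosh_im (z : ℂ) : ‖sin z‖ ≤ Real.cosh z.im := by
  refine le_of_pow_le_pow_left₀ two_ne_zero (Real.cosh_pos _).le ?_
  rw [sq_norm_sin]
  nlinarith [Real.cosh_sq z.im, Real.sin_sq_le_one z.re]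

lemma norm_cos_le_cosh_im (z : ℂ) : ‖cos z‖ ≤ Real.cosh z.im := by
  simpa [Real.cosh_neg] using
    norm_sin_le_cosh_im (Real.pi / 2 - z) |>.trans_eq' (by rw [sin_pi_div_two_sub])

lemma abs_sin_re_le_norm_sin (z : ℂ) : |Real.sin z.re| ≤ ‖sin z‖ :=
  le_of_pow_le_pow_left₀ two_ne_zero (norm_nonneg _) <| by
    rw [sq_abs, sq_norm_sin]; nlinarith [sq_nonneg (Real.sinh z.im)]

lemma abs_sinh_im_le_norm_sin (z : ℂ) : |Real.sinh z.im| ≤ ‖sin z‖ :=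
  le_of_pow_le_pow_left₀ two_ne_zero (norm_nonneg _) <| by
    rw [sq_abs, sq_norm_sin]; nlinarith [sq_nonneg (Real.sin z.re)]

variable (z : ℂ) {α : ℝ}

lemma norm_sin_mul_ofReal_le (c : ℝ) : ‖sin (z * c)‖ ≤ Real.cosh (|z.im| * |c|) := by
  simpa [← abs_mul, Real.cosh_abs] using norm_sin_le_cosh_im (z * c)

lemma norm_cos_mul_ofReal_le (c : ℝ) : ‖cos (z * c)‖ ≤ Real.cosh (|z.im| * |c|) := by
  simpa [← abs_mul, Real.cosh_abs] using norm_cos_le_cosh_im (z * c)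

lemma sinh_abs_im_mul_le_norm_sin (hα : 0 ≤ α) : Real.sinh (|z.im| * α) ≤ ‖sin (z * α)‖ := by
  simpa [Real.abs_sinh, abs_mul, abs_of_nonneg hα] using abs_sinh_im_le_norm_sin (z * α)

lemma sq_norm_sin_mul_ofReal (hα : 0 ≤ α) :
    ‖sin (z * α)‖ ^ 2 = |Real.sin (z.re * α)| ^ 2 + Real.sinh (|z.im| * α) ^ 2 := by
  rw [sq_norm_sin, sq_abs, ← sq_abs (Real.sinh _), Real.abs_sinh]
  simp [abs_mul, abs_of_nonneg hα]

lemma abs_im_mul_norm_div_mul_le (u v : ℂ) : |z.im| * ‖u / (z * v)‖ ≤ ‖u / v‖ := by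
  rcases eq_or_ne z 0 with rfl | hz
  · simp only [zero_im, abs_zero, zero_mul]; positivity
  rw [mul_comm z, ← div_div, norm_div, mul_div_assoc']
  exact div_le_of_le_mul₀ (norm_nonneg _) (norm_nonneg _)
    (mul_le_mul_of_nonneg_right (abs_im_le_norm z) (norm_nonneg _) |>.trans_eq (mul_comm _ _))

end Complex

section SinQuotients

open Complex

variable {z : ℂ} {α : ℝ}

lemma norm_mul_le_cosh {u v : ℂ} {c₁ c₂ : ℝ} (hu : ‖u‖ ≤ Real.cosh (|z.im| * |c₁|))
    (hv : ‖v‖ ≤ Real.cosh (|z.im| * |c₂|)) (h : |c₁| + |c₂| ≤ α) :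
    ‖u * v‖ ≤ Real.cosh (|z.im| * α) := by
  rw [norm_mul]
  exact (mul_le_mul hu hv (norm_nonneg _) (Real.cosh_pos _).le).trans
    (Real.cosh_mul_cosh_le_cosh (by positivity) (by positivity) (by nlinarith [abs_nonneg z.im]))

lemma norm_div_sin_le (hα : 0 ≤ α) (hm : 0 < |Real.sin (z.re * α)|) {u : ℂ}
    (hu : ‖u‖ ≤ Real.cosh (|z.im| * α)) :
    ‖u / sin (z * α)‖ ≤ 2 / |Real.sin (z.re * α)| := by
  set m := |Real.sin (z.re * α)|
  have hmT : m ≤ ‖sin (z * α)‖ := by simpa using abs_sin_re_le_norm_sin (z * α)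
  have hu' : ‖u‖ ≤ 1 + ‖sin (z * α)‖ :=
    hu.trans <| (Real.cosh_le_one_add_sinh (by positivity)).trans
      (by linarith [sinh_abs_im_mul_le_norm_sin z hα])
  have hm1 : m ≤ 1 := Real.abs_sin_le_one _
  rw [norm_div, div_le_div_iff₀ (hm.trans_le hmT) hm]
  nlinarith

/-- Twice the numerator of `∂_ξ (sin (Ξw) / sin (Ξα))` for `Ξ = σ + iξ`, in a form in which no
two exponentially large terms cancel. -/
def sinRatioDerivNum (z : ℂ) (α w : ℝ) : ℂ :=
  ((w - α : ℝ) : ℂ) * sin (z * (α + w : ℝ)) + ((w + α : ℝ) : ℂ) * sin (z * (α - w : ℝ))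

def sinRatioDeriv (z : ℂ) (α w : ℝ) : ℂ :=
  I * sinRatioDerivNum z α w / (2 * sin (z * α) ^ 2)

lemma sinRatioDerivNum_eq (z : ℂ) (α w : ℝ) :
    sinRatioDerivNum z α w =
      2 * (w * cos (z * w) * sin (z * α) - α * sin (z * w) * cos (z * α)) := by
  simp only [sinRatioDerivNum]
  push_cast
  rw [mul_add, mul_sub, Complex.sin_add, Complex.sin_sub]
  ring

lemma sinRatioDerivNum_neg (z : ℂ) (α w : ℝ) :
    sinRatioDerivNum z α (-w) = -sinRatioDerivNum z α w := by
  rw [sinRatioDerivNum_eq, sinRatioDerivNum_eq]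
  push_cast
  rw [mul_neg, Complex.sin_neg, Complex.cos_neg]
  ring

lemma abs_im_mul_norm_sinRatioDerivNum_le {w : ℝ} (hw : |w| ≤ α) :
    |z.im| * ‖sinRatioDerivNum z α w‖ ≤
      6 * (Real.sinh (|z.im| * α) + Real.sinh (|z.im| * α) ^ 2) := by
  wlog hw0 : 0 ≤ w generalizing w
  · have := this (w := -w) (by rwa [abs_neg]) (by linarith)
    rwa [sinRatioDerivNum_neg, norm_neg] at this
  rw [abs_of_nonneg hw0] at hw
  set s := |z.im|
  have hnorm : ‖sinRatioDerivNum z α w‖ ≤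
      (α - w) * Real.cosh (s * (α + w)) + (w + α) * Real.cosh (s * (α - w)) := by
    refine (norm_add_le _ _).trans (add_le_add ?_ ?_) <;> rw [norm_mul, norm_real, Real.norm_eq_abs]
    · rw [abs_of_nonpos (by linarith), neg_sub]
      exact mul_le_mul_of_nonneg_left ((norm_sin_mul_ofReal_le z _).trans_eq
        (by rw [abs_of_nonneg (show 0 ≤ α + w by linarith)])) (by linarith)
    · rw [abs_of_nonneg (show 0 ≤ w + α by linarith)]
      exact mul_le_mul_of_nonneg_left ((norm_sin_mul_ofReal_le z _).trans_eq
        (by rw [abs_of_nonneg (show 0 ≤ α - w by linarith)])) (by linarith)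
  calc s * ‖sinRatioDerivNum z α w‖
      ≤ s * ((α - w) * Real.cosh (s * (α + w)) + (w + α) * Real.cosh (s * (α - w))) :=
        mul_le_mul_of_nonneg_left hnorm (abs_nonneg _)
    _ = s * (α - w) * Real.cosh (2 * (s * α) - s * (α - w)) +
          (2 * (s * α) - s * (α - w)) * Real.cosh (s * (α - w)) := by ring_nf
    _ ≤ _ := Real.mul_cosh_add_mul_cosh_le (by positivity)
          (mul_le_mul_of_nonneg_left (by linarith) (abs_nonneg _))

lemma abs_im_mul_norm_sinRatioDeriv_le (hα : 0 ≤ α) (hm : 0 < |Real.sin (z.re * α)|) {w : ℝ}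
    (hw : |w| ≤ α) :
    |z.im| * ‖sinRatioDeriv z α w‖ ≤ 9 / 2 / |Real.sin (z.re * α)| := by
  set m := |Real.sin (z.re * α)|
  set S := Real.sinh (|z.im| * α)
  have hT := sq_norm_sin_mul_ofReal z hα
  have hm1 : m ≤ 1 := Real.abs_sin_le_one _
  have hT0 : 0 < ‖sin (z * α)‖ ^ 2 := by rw [hT]; positivity
  have hS : S + S ^ 2 ≤ 3 / 2 * ‖sin (z * α)‖ ^ 2 / m := by
    rw [hT, le_div_iff₀ hm]; nlinarith [sq_nonneg (m - S), sq_nonneg S]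
  rw [sinRatioDeriv, norm_div, norm_mul, norm_I, one_mul, norm_mul, norm_pow, Complex.norm_ofNat,
    ← mul_div_assoc, div_le_div_iff₀ (by positivity) hm]
  nlinarith [abs_im_mul_norm_sinRatioDerivNum_le (z := z) hw, (le_div_iff₀ hm).mp hS]

lemma abs_im_mul_norm_sinRatioDeriv_add_le (hα : 0 ≤ α) (hm : 0 < |Real.sin (z.re * α)|)
    {c₁ c₂ : ℝ} (h : |c₁| + |c₂| ≤ α) :
    |z.im| * ‖(sinRatioDeriv z α (c₁ + c₂) + sinRatioDeriv z α (c₂ - c₁)) / 2‖ ≤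
      9 / 2 / |Real.sin (z.re * α)| := by
  have h₁ := abs_im_mul_norm_sinRatioDeriv_le hα hm ((abs_add_le c₁ c₂).trans h)
  have h₂ := abs_im_mul_norm_sinRatioDeriv_le hα hm ((abs_sub c₂ c₁).trans (by linarith))
  rw [norm_div, Complex.norm_ofNat, mul_div_assoc', div_le_iff₀ two_pos]
  nlinarith [norm_add_le (sinRatioDeriv z α (c₁ + c₂)) (sinRatioDeriv z α (c₂ - c₁)),
    abs_nonneg z.im]

end SinQuotients

lemma Xi_re (q ξ : ℝ) : (Xi q ξ).re = 2 / q := by simp [Xi]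

lemma Xi_im (q ξ : ℝ) : (Xi q ξ).im = ξ := by simp [Xi]

lemma Xi_ne_zero {q : ℝ} (hq : q ≠ 0) (ξ : ℝ) : Xi q ξ ≠ 0 := fun h => by
  simpa [Xi_re, hq] using congrArg Complex.re h

section Derivatives

open Complex

lemma hasDerivAt_sin_Xi_mul (q c ξ : ℝ) :
    HasDerivAt (fun s : ℝ => sin (Xi q s * c)) (cos (Xi q ξ * c) * (I * c)) ξ := by
  have h : HasDerivAt (fun s : ℝ => Xi q s * c) (I * c) ξ := by
    simpa [Xi] using (((hasDerivAt_id ξ).ofReal_comp.mul_const I).const_add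
      ((2 / q : ℝ) : ℂ)).mul_const (c : ℂ)
  exact (Complex.hasDerivAt_sin _).comp ξ h

lemma hasDerivAt_sin_div_sin {q α w ξ : ℝ} (h : sin (Xi q ξ * α) ≠ 0) :
    HasDerivAt (fun s : ℝ => sin (Xi q s * w) / sin (Xi q s * α))
      (sinRatioDeriv (Xi q ξ) α w) ξ := by
  refine ((hasDerivAt_sin_Xi_mul q w ξ).div (hasDerivAt_sin_Xi_mul q α ξ) h).congr_deriv ?_
  rw [sinRatioDeriv, sinRatioDerivNum_eq]
  field_simp

lemma hasDerivAt_cos_mul_sin_div_sin {q α c₁ c₂ ξ : ℝ} (h : sin (Xi q ξ * α) ≠ 0) :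
    HasDerivAt (fun s : ℝ => cos (Xi q s * c₁) * sin (Xi q s * c₂) / sin (Xi q s * α))
      ((sinRatioDeriv (Xi q ξ) α (c₁ + c₂) + sinRatioDeriv (Xi q ξ) α (c₂ - c₁)) / 2) ξ := by
  have hsum : ∀ s : ℝ, cos (Xi q s * c₁) * sin (Xi q s * c₂) / sin (Xi q s * α) =
      (sin (Xi q s * (c₁ + c₂ : ℝ)) / sin (Xi q s * α) +
        sin (Xi q s * (c₂ - c₁ : ℝ)) / sin (Xi q s * α)) / 2 := fun s => by
    push_cast
    rw [mul_add, mul_sub, Complex.sin_add, Complex.sin_sub]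
    ring
  simp only [hsum]
  exact ((hasDerivAt_sin_div_sin h).add (hasDerivAt_sin_div_sin h)).div_const 2

lemma hasDerivAt_sin_mul_ofReal_sub (z : ℂ) (a θ : ℝ) :
    HasDerivAt (fun t : ℝ => sin (z * (t - a : ℝ))) (cos (z * (θ - a : ℝ)) * z) θ := by
  have h := (Complex.hasDerivAt_sin _).comp θ
    (((hasDerivAt_id θ).sub_const a).ofReal_comp.const_mul z)
  simp only [Function.comp_def, id, Complex.ofReal_one, mul_one] at h
  exact h

end Derivatives

section Kernel

open Complex Filter Topology

lemma Kker_eventuallyEq {q α θ y : ℝ} (hθ : θ ∈ Set.Ioo 0 α) (hy : y ∈ Set.Ioo 0 α)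
    (hθy : θ ≠ y) :
    ∃ a b : ℝ, |θ - a| + |b| ≤ α ∧ ∀ᶠ t in 𝓝 θ, ∀ ξ : ℝ,
      Kker q α ξ t y =
        sin (Xi q ξ * (t - a : ℝ)) * sin (Xi q ξ * b) / (Xi q ξ * sin (Xi q ξ * α)) := by
  obtain ⟨hθ0, hθα⟩ := hθ
  obtain ⟨hy0, hyα⟩ := hy
  rcases hθy.lt_or_gt with hlt | hgt
  · refine ⟨0, y - α, ?_, ?_⟩
    · rw [sub_zero, abs_of_pos hθ0, abs_of_neg (by linarith)]; linarith
    filter_upwards [Iio_mem_nhds hlt] with t ht ξ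
    simp [Kker, (Set.mem_Iio.mp ht).le]
  · refine ⟨α, y, ?_, ?_⟩
    · rw [abs_of_neg (by linarith), abs_of_pos hy0]; linarith
    filter_upwards [Ioi_mem_nhds hgt] with t ht ξ
    simp [Kker, not_le.mpr (Set.mem_Ioi.mp ht)]

lemma deriv_Kker_eq {q α θ y a b : ℝ} (hq : q ≠ 0)
    (hK : ∀ᶠ t in 𝓝 θ, ∀ ξ : ℝ,
      Kker q α ξ t y =
        sin (Xi q ξ * (t - a : ℝ)) * sin (Xi q ξ * b) / (Xi q ξ * sin (Xi q ξ * α)))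
    (ξ : ℝ) :
    deriv (fun t : ℝ => Kker q α ξ t y) θ =
      cos (Xi q ξ * (θ - a : ℝ)) * sin (Xi q ξ * b) / sin (Xi q ξ * α) := by
  have hKξ : (fun t : ℝ => Kker q α ξ t y) =ᶠ[𝓝 θ]
      fun t : ℝ => sin (Xi q ξ * (t - a : ℝ)) * sin (Xi q ξ * b) / (Xi q ξ * sin (Xi q ξ * α)) :=
    hK.mono fun t ht => ht ξ
  rw [hKξ.deriv_eq, (((hasDerivAt_sin_mul_ofReal_sub _ a θ).mul_const _).div_const _).deriv]
  have := Xi_ne_zero hq ξ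
  field_simp

end Kernel

namespace Admissible

open Real

lemma two_div_pi_mul_le_abs_sin {α p : ℝ} (h : Admissible α p) (hα : 0 < α) (hαπ : α < π)
    (hp : 2 ≤ p) :
    2 / π * min α (min |α - π / 2| (π - α)) ≤ |sin (2 / (p / (p - 1)) * α)| := by
  set ε := min α (min |α - π / 2| (π - α))
  have hεα : ε ≤ α := min_le_left _ _
  have hεabs : ε ≤ |α - π / 2| := (min_le_right _ _).trans (min_le_left _ _)
  have hεπ : ε ≤ π - α := (min_le_right _ _).trans (min_le_right _ _)
  have hε : 0 ≤ ε := le_min hα.le (le_min (abs_nonneg _) (by linarith))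
  have hp0 : 0 < p := by linarith
  have hσ : 2 / (p / (p - 1)) * α = 2 * α - 2 * α / p := by
    field_simp [(by linarith : p - 1 ≠ 0)]
  have hαp : 0 < 2 * α / p := by positivity
  rw [hσ]
  rcases h with ⟨hα2, -⟩ | ⟨hα2, hpα⟩
  · rw [abs_of_neg (by linarith)] at hεabs
    have : 2 * α / p ≤ α := by rw [div_le_iff₀ hp0]; nlinarith
    exact (two_div_pi_mul_le_sin hε (by linarith) (by linarith)).trans (le_abs_self _)
  · rw [abs_of_pos (by linarith)] at hεabs
    have hpα' : 4 * α ≤ p * (2 * α - π) := by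
      rw [← div_le_iff₀ (by linarith), show 4 * α = 2 * (2 * α) by ring, mul_div_assoc]
      exact hpα
    have : 2 * α / p ≤ α - π / 2 := by rw [div_le_iff₀ hp0]; nlinarith
    rw [← abs_neg, ← sin_sub_pi]
    exact (two_div_pi_mul_le_sin hε (by linarith) (by linarith)).trans (le_abs_self _)

end Admissible

/-- Uniform bounds `|∂_θ K| ≤ C ε_α⁻¹`, `|ξ||K| ≤ C ε_α⁻¹` and
`|ξ||∂_ξ ∂_θ K| ≤ C ε_α⁻¹` for the Green kernel, with `q = p/(p-1)`,
`ε_α = min(α, |α−π/2|, π−α)`, `p` admissible for `α`, and `θ ≠ y`. -/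
theorem stmt18 :
    ∃ C : ℝ, 0 < C ∧
      ∀ α : ℝ, 0 < α → α < Real.pi → α ≠ Real.pi / 2 →
      ∀ p : ℝ, 2 ≤ p → Admissible α p →
      ∀ ξ θ y : ℝ, 0 < θ → θ < α → 0 < y → y < α → θ ≠ y →
        norm (deriv (fun t : ℝ => Kker (p / (p - 1)) α ξ t y) θ) ≤
            C / min α (min |α - Real.pi / 2| (Real.pi - α)) ∧
          |ξ| * norm (Kker (p / (p - 1)) α ξ θ y) ≤
            C / min α (min |α - Real.pi / 2| (Real.pi - α)) ∧
          |ξ| *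
              norm
                (deriv (fun s : ℝ =>
                  deriv (fun t : ℝ => Kker (p / (p - 1)) α s t y) θ) ξ) ≤
            C / min α (min |α - Real.pi / 2| (Real.pi - α)) := by
  refine ⟨9, by norm_num, fun α hα hαπ hαne p hp hadm ξ θ y hθ hθα hy hyα hθy => ?_⟩
  set q := p / (p - 1)
  set ε := min α (min |α - Real.pi / 2| (Real.pi - α))
  have hq : q ≠ 0 := (div_pos (by linarith) (by linarith)).ne'
  have hε : 0 < ε := lt_min hα (lt_min (abs_pos.mpr (sub_ne_zero.mpr hαne)) (by linarith))
  have hsin : 2 / Real.pi * ε ≤ |Real.sin ((Xi q ξ).re * α)| := by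
    rw [Xi_re]; exact hadm.two_div_pi_mul_le_abs_sin hα hαπ hp
  have hm : 0 < |Real.sin ((Xi q ξ).re * α)| :=
    (mul_pos (by positivity) hε).trans_le hsin
  have hsin0 : Complex.sin (Xi q ξ * α) ≠ 0 := norm_pos_iff.mp <|
    hm.trans_le (by simpa using Complex.abs_sin_re_le_norm_sin (Xi q ξ * α))
  have hbound : ∀ {v c : ℝ}, 0 ≤ c → c ≤ 9 / 2 →
      v ≤ c / |Real.sin ((Xi q ξ).re * α)| → v ≤ 9 / ε := fun hc0 hc hv =>
    hv.trans <| (Real.div_le_two_mul_div_of_two_div_pi_mul_le hc0 hε hsin).trans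
      (by gcongr; linarith)
  obtain ⟨a, b, hab, hK⟩ := Kker_eventuallyEq (q := q) ⟨hθ, hθα⟩ ⟨hy, hyα⟩ hθy
  have hderiv := deriv_Kker_eq hq hK
  refine ⟨?_, ?_, ?_⟩
  · rw [hderiv]
    exact hbound zero_le_two (by norm_num) <| norm_div_sin_le hα.le hm <|
      norm_mul_le_cosh (Complex.norm_cos_mul_ofReal_le _ _) (Complex.norm_sin_mul_ofReal_le _ _) hab
  · rw [hK.self_of_nhds ξ]
    refine hbound zero_le_two (by norm_num) ?_
    simpa only [Xi_im] using (Complex.abs_im_mul_norm_div_mul_le (Xi q ξ) _ _).trans <|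
      norm_div_sin_le hα.le hm <|
        norm_mul_le_cosh (Complex.norm_sin_mul_ofReal_le _ _)
          (Complex.norm_sin_mul_ofReal_le _ _) hab
  · rw [funext hderiv, (hasDerivAt_cos_mul_sin_div_sin hsin0).deriv]
    refine hbound (by norm_num) le_rfl ?_
    simpa only [Xi_im] using abs_im_mul_norm_sinRatioDeriv_add_le hα.le hm hab
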